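/- For any increment array t of size s with period π(t), the number of distinct coalitions generated by t as the starting agent ranges over {1, …, n} is exactly the stride: |⋃_{i=1}^{n} {C(i, t)}| = n·π(t)/s. Moreover, C(i, t) = C(j, t) if and only if i ≡ j (mod n·π(t)/s). -/
import Mathlib


namespace NDCA

/-- `t` is an increment array (IA) of size `s` for `n` agents:
a tuple of non-negative integers of length `s` with sum `n - s`. -/
def IsIA (n s : ℕ) (t : List ℕ) : Prop :=
  t.length = s ∧ t.sum = n - s

/-- Cumulative increment `φ_i` (1-indexed): `φ_1 = 0`, and
`φ_i = Σ_{k=0}^{i-2} (t_k + 1)` for `2 ≤ i`. -/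
def phi (t : List ℕ) (i : ℕ) : ℕ := (t.take (i - 1)).sum + (i - 1)

/-- The coalition generated by increment array `t` from starting agent `x`:
`C(x,t) = { ((x - 1 + φ_i) mod n) + 1 : 1 ≤ i ≤ s }`. -/
def coal (n x : ℕ) (t : List ℕ) : Finset ℕ :=
  (Finset.Icc 1 t.length).image (fun i => (x - 1 + phi t i) % n + 1)

/-- The collection of coalitions generated by `t` as the starting agent
ranges over `{1, …, n}`. -/
def gen (n : ℕ) (t : List ℕ) : Finset (Finset ℕ) :=
  (Finset.Icc 1 n).image (fun x => coal n x t)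

/-- `u` is a circular shift of `t`: `u = ⟨t_k, …, t_{s-1}, t_0, …, t_{k-1}⟩`
for some `0 ≤ k ≤ s - 1`. -/
def ShiftEquiv (t u : List ℕ) : Prop :=
  ∃ k, k < t.length ∧ u = t.rotate k

/-- `p` is a period of `t`: `1 ≤ p`, `p ∣ |t|`, and `t` consists of
`|t|/p` identical copies of its first `p` entries. -/
def IsPeriodOf (t : List ℕ) (p : ℕ) : Prop :=
  1 ≤ p ∧ p ∣ t.length ∧ t = (List.replicate (t.length / p) (t.take p)).flatten

/-- The period `π(t)`: the smallest `p` that is a period of `t`. -/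
noncomputable def period (t : List ℕ) : ℕ := sInf {p | IsPeriodOf t p}

lemma phi_one (t : List ℕ) : phi t 1 = 0 := by simp [phi]

lemma sum_take_mono (t : List ℕ) {a b : ℕ} (h : a ≤ b) :
    (t.take a).sum ≤ (t.take b).sum := by
  have h2 : t.take a = (t.take b).take a := by rw [List.take_take]; congr 1; omega
  rw [h2]
  exact List.Sublist.sum_le_sum (List.take_sublist _ _) (by intro x _; exact Nat.zero_le x)

lemma phi_mono (t : List ℕ) {i j : ℕ} (hij : i ≤ j) : phi t i ≤ phi t j := by
  unfold phi; have := sum_take_mono t (show i - 1 ≤ j - 1 by omega); omega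

lemma phi_strictMono (t : List ℕ) {i j : ℕ} (hi : 1 ≤ i) (hij : i < j) : phi t i < phi t j := by
  unfold phi; have := sum_take_mono t (show i - 1 ≤ j - 1 by omega); omega

lemma phi_succ (t : List ℕ) (k : ℕ) (hk : k < t.length) :
    phi t (k + 2) = phi t (k + 1) + t[k] + 1 := by
  unfold phi
  simp only [show k + 2 - 1 = k + 1 from rfl, Nat.add_sub_cancel]
  rw [List.sum_take_succ t k hk]; omega

lemma phi_top (t : List ℕ) : phi t (t.length + 1) = t.sum + t.length := by
  unfold phi; simp

lemma phi_lt (t : List ℕ) {n i : ℕ} (hsum : t.sum + t.length = n)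
    (hi : 1 ≤ i) (his : i ≤ t.length) : phi t i < n := by
  have := phi_strictMono t hi (show i < t.length + 1 by omega)
  rw [phi_top] at this; omega

-- period basics
lemma isPeriodOf_length (t : List ℕ) (h : t ≠ []) : IsPeriodOf t t.length := by
  refine ⟨by cases t <;> simp_all, dvd_refl _, ?_⟩
  rw [Nat.div_self (by simpa using List.length_pos_iff.mpr h)]
  simp

lemma period_isPeriodOf (t : List ℕ) (h : t ≠ []) : IsPeriodOf t (period t) :=
  Nat.sInf_mem (⟨t.length, isPeriodOf_length t h⟩ : ∃ p, p ∈ {p | IsPeriodOf t p})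

lemma period_le (t : List ℕ) {p : ℕ} (h : IsPeriodOf t p) : period t ≤ p :=
  Nat.sInf_le h

lemma take_flatten_replicate (b : List ℕ) : ∀ (k r i : ℕ), k < r → i ≤ b.length →
    ((List.replicate r b).flatten.take (k * b.length + i)) = (List.replicate k b).flatten ++ b.take i := by
  intro k
  induction k with
  | zero =>
    intro r i hr hi
    obtain ⟨r', rfl⟩ : ∃ r', r = r' + 1 := ⟨r - 1, by omega⟩
    simp [List.replicate_succ, List.take_append, Nat.sub_eq_zero_of_le hi]
  | succ k ih =>
    intro r i hr hi
    obtain ⟨r', rfl⟩ : ∃ r', r = r' + 1 := ⟨r - 1, by omega⟩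
    rw [List.replicate_succ, List.replicate_succ, List.flatten_cons, List.flatten_cons]
    rw [show (k+1) * b.length + i = b.length + (k * b.length + i) by ring]
    rw [List.take_append]
    simp [ih r' i (by omega) hi]

lemma sum_flatten_replicate (b : List ℕ) (k : ℕ) :
    ((List.replicate k b).flatten).sum = k * b.sum := by
  induction k with
  | zero => simp
  | succ k ih => rw [List.replicate_succ, List.flatten_cons, List.sum_append, ih]; ring

section Block
variable {t : List ℕ} {p : ℕ}

lemma p_le_len (hp : IsPeriodOf t p) (hne : t ≠ []) : p ≤ t.length :=
  Nat.le_of_dvd (by simpa using List.length_pos_iff.mpr hne) hp.2.1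

lemma len_b (hp : IsPeriodOf t p) (hne : t ≠ []) : (t.take p).length = p := by
  simp [List.length_take, Nat.min_eq_left (p_le_len hp hne)]

lemma len_eq (hp : IsPeriodOf t p) : t.length = (t.length / p) * p :=
  (Nat.div_mul_cancel hp.2.1).symm

lemma t_sum_block (hp : IsPeriodOf t p) : t.sum = (t.length / p) * (t.take p).sum := by
  conv_lhs => rw [hp.2.2]
  rw [sum_flatten_replicate]

lemma phi_take (hp : IsPeriodOf t p) {j : ℕ} (hj : j ≤ p + 1) : phi (t.take p) j = phi t j := by
  unfold phi
  rw [List.take_take, Nat.min_eq_left (by omega)]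

lemma phi_block (hp : IsPeriodOf t p) (hne : t ≠ []) {j k : ℕ} (hj1 : 1 ≤ j) (hjp : j ≤ p)
    (hk : k < t.length / p) :
    phi t (j + k * p) = phi (t.take p) j + k * ((t.take p).sum + p) := by
  have hb := len_b hp hne
  unfold phi
  conv_lhs => rw [hp.2.2]
  rw [show j + k * p - 1 = k * (t.take p).length + (j - 1) by rw [hb]; omega]
  rw [take_flatten_replicate _ k _ (j-1) hk (by omega)]
  rw [List.sum_append, sum_flatten_replicate, hb]
  ring

end Block

-- rotation lemmas
lemma rotate_fixed_add {t : List ℕ} {a : ℕ} (h : t.rotate a = t) (x k : ℕ) :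
    t.rotate (x + k * a) = t.rotate x := by
  induction k with
  | zero => simp
  | succ k ih =>
    rw [show x + (k+1) * a = (x + k * a) + a by ring, ← List.rotate_rotate, ih]
    rw [List.rotate_rotate, Nat.add_comm, ← List.rotate_rotate, h]

lemma rotate_gcd {t : List ℕ} : ∀ {a b : ℕ}, t.rotate a = t → t.rotate b = t →
    t.rotate (Nat.gcd a b) = t := by
  intro a b
  induction a, b using Nat.gcd.induction with
  | H0 n => intro _ hb; simpa
  | H1 m n hm ih =>
    intro ha hb
    rw [Nat.gcd_rec]
    refine ih ?_ ha
    have : t.rotate (n % m + (n / m) * m) = t.rotate (n % m) := rotate_fixed_add ha _ _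
    rw [Nat.mod_add_div'] at this
    rw [← this, hb]

lemma isPeriodOf_rotate {t : List ℕ} {p : ℕ} (hp : IsPeriodOf t p) (hne : t ≠ []) :
    t.rotate p = t := by
  obtain ⟨hp1, hpd, heq⟩ := hp
  set r := t.length / p with hr
  have hrpos : 1 ≤ r := Nat.one_le_div_iff (by omega) |>.mpr (p_le_len ⟨hp1,hpd,heq⟩ hne)
  have hb := len_b ⟨hp1,hpd,heq⟩ hne
  conv_lhs => rw [heq]
  obtain ⟨r', hr'⟩ : ∃ r', r = r' + 1 := ⟨r - 1, by omega⟩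
  rw [hr', List.replicate_succ, List.flatten_cons]
  rw [List.rotate_eq_drop_append_take (by simp [hb])]
  have h1 : List.drop p (t.take p ++ (List.replicate r' (t.take p)).flatten)
      = (List.replicate r' (t.take p)).flatten := List.drop_left' hb
  have h2 : List.take p (t.take p ++ (List.replicate r' (t.take p)).flatten)
      = t.take p := List.take_left' hb
  rw [h1, h2]
  conv_rhs => rw [heq, hr', List.replicate_succ', List.flatten_append]
  simp

lemma rotate_fixed_mul {t : List ℕ} {a : ℕ} (h : t.rotate a = t) (k : ℕ) :
    t.rotate (k * a) = t := by
  have := rotate_fixed_add h 0 k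
  simpa using this

lemma isPeriodOf_of_rotate {t : List ℕ} {g : ℕ} (hne : t ≠ []) (h : t.rotate g = t)
    (hg1 : 1 ≤ g) (hgd : g ∣ t.length) : IsPeriodOf t g := by
  refine ⟨hg1, hgd, ?_⟩
  set r := t.length / g with hr
  have hlen : t.length = r * g := (Nat.div_mul_cancel hgd).symm
  have key : ∀ k, k ≤ r → t.take (k * g) = (List.replicate k (t.take g)).flatten := by
    intro k
    induction k with
    | zero => simp
    | succ k ih =>
      intro hk
      have hrot : t.rotate (k * g) = t := rotate_fixed_mul h k
      have hkg : k * g ≤ t.length := by rw [hlen]; exact Nat.mul_le_mul_right _ (by omega)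
      have hdrop : t.drop (k * g) ++ t.take (k * g) = t := by
        rw [← List.rotate_eq_drop_append_take hkg, hrot]
      have hlendrop : (t.drop (k * g)).length = t.length - k * g := by simp
      have hgle : g ≤ (t.drop (k*g)).length := by rw [hlendrop, hlen]; calc
        g = 1 * g := (one_mul g).symm
        _ ≤ (r - k) * g := Nat.mul_le_mul_right _ (by omega)
        _ = r * g - k * g := by rw [Nat.sub_mul]
      have htake : (t.drop (k * g)).take g = t.take g := by
        conv_rhs => rw [← hdrop]
        rw [List.take_append_of_le_length hgle]
      rw [show (k+1) * g = k * g + g by ring, List.take_add, ih (by omega), htake,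
        List.replicate_succ', List.flatten_append]
      simp
  have := key r (le_refl r)
  rw [← hlen, List.take_length] at this
  exact this

lemma period_dvd_of_rotate {t : List ℕ} {m : ℕ} (hne : t ≠ []) (h : t.rotate m = t) :
    period t ∣ m := by
  have hpp := period_isPeriodOf t hne
  have hrotp : t.rotate (period t) = t := isPeriodOf_rotate hpp hne
  have hg : t.rotate (Nat.gcd (period t) m) = t := rotate_gcd hrotp h
  set g := Nat.gcd (period t) m with hgdef
  have hg1 : 1 ≤ g := Nat.gcd_pos_of_pos_left m hpp.1
  have hgdvd : g ∣ t.length := dvd_trans (Nat.gcd_dvd_left _ _) hpp.2.1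
  have hper : IsPeriodOf t g := isPeriodOf_of_rotate hne hg hg1 hgdvd
  have h1 : period t ≤ g := period_le t hper
  have h2 : g ≤ period t := Nat.le_of_dvd hpp.1 (Nat.gcd_dvd_left _ _)
  have : g = period t := by omega
  rw [← this]
  exact Nat.gcd_dvd_right _ _

def aset (t : List ℕ) : Finset ℕ := (Finset.Icc 1 t.length).image (phi t)

def shf (n c : ℕ) (A : Finset ℕ) : Finset ℕ := A.image (fun a => (a + c) % n)

lemma shf_shf (n c₁ c₂ : ℕ) (A : Finset ℕ) : shf n c₂ (shf n c₁ A) = shf n (c₁ + c₂) A := by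
  unfold shf
  rw [Finset.image_image]
  congr 1
  funext a
  simp only [Function.comp_apply]
  rw [Nat.mod_add_mod, Nat.add_assoc]

lemma shf_zero {n : ℕ} {A : Finset ℕ} (hA : A ⊆ Finset.range n) : shf n 0 A = A := by
  unfold shf
  rw [Finset.image_congr (g := id), Finset.image_id]
  intro a ha
  simp only [Nat.add_zero, id]
  exact Nat.mod_eq_of_lt (Finset.mem_range.mp (hA ha))

lemma shf_n {n : ℕ} {A : Finset ℕ} (hA : A ⊆ Finset.range n) : shf n n A = A := by
  rw [show shf n n A = shf n 0 A from ?_, shf_zero hA]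
  unfold shf
  congr 1
  funext a
  simp [Nat.add_mod_right]

lemma shf_subset_range {n c : ℕ} (hn : 0 < n) (A : Finset ℕ) : shf n c A ⊆ Finset.range n := by
  intro x hx
  simp only [shf, Finset.mem_image] at hx
  obtain ⟨a, _, rfl⟩ := hx
  exact Finset.mem_range.mpr (Nat.mod_lt _ hn)

lemma card_shf {n c : ℕ} {A : Finset ℕ} (hn : 0 < n) (hA : A ⊆ Finset.range n) :
    (shf n c A).card = A.card := by
  apply Finset.card_image_of_injOn
  intro a ha b hb hab
  have ha' := Finset.mem_range.mp (hA ha)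
  have hb' := Finset.mem_range.mp (hA hb)
  have : (a + c) % n = (b + c) % n := hab
  have h2 : a % n = b % n := Nat.ModEq.add_right_cancel' c this
  rwa [Nat.mod_eq_of_lt ha', Nat.mod_eq_of_lt hb'] at h2

-- A basics
lemma mem_aset {t : List ℕ} {a : ℕ} : a ∈ aset t ↔ ∃ i, 1 ≤ i ∧ i ≤ t.length ∧ phi t i = a := by
  simp [aset, Finset.mem_image, Finset.mem_Icc, and_assoc]

lemma aset_subset_range {t : List ℕ} {n : ℕ} (hsum : t.sum + t.length = n) :
    aset t ⊆ Finset.range n := by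
  intro a ha
  obtain ⟨i, hi1, hi2, rfl⟩ := mem_aset.mp ha
  exact Finset.mem_range.mpr (phi_lt t hsum hi1 hi2)

lemma card_aset (t : List ℕ) : (aset t).card = t.length := by
  rw [aset, Finset.card_image_of_injOn, Nat.card_Icc]
  · omega
  · intro i hi j hj hij
    simp only [Finset.mem_coe, Finset.mem_Icc] at hi hj
    by_contra hne
    rcases Nat.lt_or_ge i j with h | h
    · exact absurd hij (Nat.ne_of_lt (phi_strictMono t hi.1 h))
    · have : j < i := by omega
      exact absurd hij.symm (Nat.ne_of_lt (phi_strictMono t hj.1 this))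

lemma cnt_phi (t : List ℕ) {i : ℕ} (hi : 1 ≤ i) (hi2 : i ≤ t.length + 1) :
    ((aset t).filter (· < phi t i)).card = i - 1 := by
  have : (aset t).filter (· < phi t i) = (Finset.Icc 1 (i-1)).image (phi t) := by
    ext a
    simp only [Finset.mem_filter, mem_aset, Finset.mem_image, Finset.mem_Icc]
    constructor
    · rintro ⟨⟨j, hj1, hj2, rfl⟩, hlt⟩
      refine ⟨j, ⟨hj1, ?_⟩, rfl⟩
      by_contra hc
      have : i ≤ j := by omega
      rcases Nat.eq_or_lt_of_le this with rfl | hlt2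
      · omega
      · exact absurd hlt (by have := phi_strictMono t hi hlt2; omega)
    · rintro ⟨j, ⟨hj1, hj2⟩, rfl⟩
      exact ⟨⟨j, hj1, by omega, rfl⟩, phi_strictMono t hj1 (by omega)⟩
  rw [this, Finset.card_image_of_injOn, Nat.card_Icc]
  · omega
  · intro a ha b hb hab
    simp only [Finset.mem_coe, Finset.mem_Icc] at ha hb
    by_contra hne
    rcases Nat.lt_or_ge a b with h | h
    · exact absurd hab (Nat.ne_of_lt (phi_strictMono t ha.1 h))
    · have : b < a := by omega
      exact absurd hab.symm (Nat.ne_of_lt (phi_strictMono t hb.1 this))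

lemma phi_of_cnt {t : List ℕ} {a k : ℕ} (ha : a ∈ aset t)
    (hk : ((aset t).filter (· < a)).card = k) : a = phi t (k+1) ∧ k + 1 ≤ t.length := by
  obtain ⟨i, hi1, hi2, rfl⟩ := mem_aset.mp ha
  have := cnt_phi t hi1 (by omega)
  have : i = k + 1 := by omega
  subst this
  exact ⟨rfl, by omega⟩

section Stab
variable {n e : ℕ} {t : List ℕ}

lemma shf_rev (hsum : t.sum + t.length = n) (hen : e ≤ n)
    (hsh : shf n e (aset t) = aset t) : shf n (n - e) (aset t) = aset t := by
  conv_lhs => rw [← hsh]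
  rw [shf_shf, show e + (n - e) = n by omega, shf_n (aset_subset_range hsum)]

lemma memA_mod (hsh : shf n e (aset t) = aset t) {a : ℕ} (ha : a ∈ aset t) :
    (a + e) % n ∈ aset t := by
  rw [← hsh]
  exact Finset.mem_image_of_mem _ ha

lemma memA_add (hsum : t.sum + t.length = n) (hsh : shf n e (aset t) = aset t)
    {a : ℕ} (ha : a ∈ aset t) (h : a + e < n) : a + e ∈ aset t := by
  have := memA_mod hsh ha
  rwa [Nat.mod_eq_of_lt h] at this

lemma memA_add_wrap (hsum : t.sum + t.length = n) (hsh : shf n e (aset t) = aset t)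
    (hen : e < n) {a : ℕ} (ha : a ∈ aset t) (h : n ≤ a + e) : a + e - n ∈ aset t := by
  have h2 := memA_mod hsh ha
  have han : a < n := Finset.mem_range.mp (aset_subset_range hsum ha)
  have : (a + e) % n = a + e - n := by
    rw [Nat.mod_eq_sub_mod h, Nat.mod_eq_of_lt (by omega)]
  rwa [this] at h2

lemma memA_sub (hsum : t.sum + t.length = n) (hsh : shf n e (aset t) = aset t)
    (hen : e < n) {a : ℕ} (ha : a ∈ aset t) (h : e ≤ a) : a - e ∈ aset t := by
  have hsh' := shf_rev hsum (by omega) hsh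
  have h2 := memA_mod hsh' ha
  have han : a < n := Finset.mem_range.mp (aset_subset_range hsum ha)
  have : (a + (n - e)) % n = a - e := by
    rw [Nat.mod_eq_sub_mod (by omega), Nat.mod_eq_of_lt (by omega)]
    omega
  rwa [this] at h2

lemma memA_sub_wrap (hsum : t.sum + t.length = n) (hsh : shf n e (aset t) = aset t)
    (hen : e < n) {a : ℕ} (ha : a ∈ aset t) (h : a < e) : a + n - e ∈ aset t := by
  have hsh' := shf_rev hsum (by omega) hsh
  have h2 := memA_mod hsh' ha
  have han : a < n := Finset.mem_range.mp (aset_subset_range hsum ha)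
  have : (a + (n - e)) % n = a + n - e := by
    rw [Nat.mod_eq_of_lt (by omega)]
    omega
  rwa [this] at h2

end Stab

section Pos
variable {n e : ℕ} {t : List ℕ}

lemma zero_mem_aset (hlen : 1 ≤ t.length) : 0 ∈ aset t :=
  mem_aset.mpr ⟨1, le_refl 1, hlen, phi_one t⟩

lemma e_mem_aset (hlen : 1 ≤ t.length) (hsum : t.sum + t.length = n)
    (hsh : shf n e (aset t) = aset t) (hen : e < n) : e ∈ aset t := by
  have := memA_add hsum hsh (zero_mem_aset hlen) (by omega)
  simpa using this

lemma cnt_lt_mem {A : Finset ℕ} {x a : ℕ} (hx : x ∈ A) (hax : a ≤ x) :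
    (A.filter (· < a)).card < A.card := by
  apply Finset.card_lt_card
  constructor
  · exact Finset.filter_subset _ _
  · intro hsub
    have := hsub hx
    simp only [Finset.mem_filter] at this
    omega

-- cnt of e is m; e = phi (m+1)
lemma e_eq_phi (hlen : 1 ≤ t.length) (hsum : t.sum + t.length = n)
    (hsh : shf n e (aset t) = aset t) (hen : e < n) :
    e = phi t (((aset t).filter (· < e)).card + 1) ∧
      ((aset t).filter (· < e)).card + 1 ≤ t.length :=
  phi_of_cnt (e_mem_aset hlen hsum hsh hen) rfl


lemma posX (hlen : 1 ≤ t.length) (hsum : t.sum + t.length = n)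
    (hsh : shf n e (aset t) = aset t) (hen : e < n)
    {i : ℕ} (hi1 : 1 ≤ i) (hi2 : i ≤ t.length) (hX : phi t i + e < n) :
    i + ((aset t).filter (· < e)).card ≤ t.length ∧
      phi t (i + ((aset t).filter (· < e)).card) = phi t i + e := by
  have haA : phi t i ∈ aset t := mem_aset.mpr ⟨i, hi1, hi2, rfl⟩
  have hbA : phi t i + e ∈ aset t := memA_add hsum hsh haA hX
  have hsplit : (aset t).filter (· < phi t i + e)
      = (aset t).filter (· < e) ∪ (aset t).filter (fun x => e ≤ x ∧ x < phi t i + e) := by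
    ext x
    simp only [Finset.mem_filter, Finset.mem_union, ← and_or_left]
    exact and_congr_right (fun _ => by omega)
  have hdisj : Disjoint ((aset t).filter (· < e))
      ((aset t).filter (fun x => e ≤ x ∧ x < phi t i + e)) := by
    rw [Finset.disjoint_left]
    intro x hx hx'
    simp only [Finset.mem_filter] at hx hx'
    omega
  have hmid : ((aset t).filter (fun x => e ≤ x ∧ x < phi t i + e)).card
      = ((aset t).filter (· < phi t i)).card := by
    apply Finset.card_bij' (fun x _ => x - e) (fun y _ => y + e)
    · intro x hx
      simp only [Finset.mem_filter] at hx ⊢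
      exact ⟨memA_sub hsum hsh hen hx.1 hx.2.1, by omega⟩
    · intro y hy
      simp only [Finset.mem_filter] at hy ⊢
      exact ⟨memA_add hsum hsh hy.1 (by omega), by omega, by omega⟩
    · intro x hx
      simp only [Finset.mem_filter] at hx
      omega
    · intro y _
      omega
  have hcnta : ((aset t).filter (· < phi t i)).card = i - 1 := cnt_phi t hi1 (by omega)
  have hcnt : ((aset t).filter (· < phi t i + e)).card
      = ((aset t).filter (· < e)).card + (i - 1) := by
    rw [hsplit, Finset.card_union_of_disjoint hdisj, hmid, hcnta]
  obtain ⟨heq, hle⟩ := phi_of_cnt hbA hcnt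
  refine ⟨by omega, ?_⟩
  rw [show i + ((aset t).filter (· < e)).card
      = ((aset t).filter (· < e)).card + (i-1) + 1 by omega]
  exact heq.symm

lemma posY (hlen : 1 ≤ t.length) (hsum : t.sum + t.length = n)
    (hsh : shf n e (aset t) = aset t) (he : 0 < e) (hen : e < n)
    {i : ℕ} (hi1 : 1 ≤ i) (hi2 : i ≤ t.length) (hY : n ≤ phi t i + e) :
    t.length < i + ((aset t).filter (· < e)).card ∧
      phi t (i + ((aset t).filter (· < e)).card - t.length) = phi t i + e - n := by
  have haA : phi t i ∈ aset t := mem_aset.mpr ⟨i, hi1, hi2, rfl⟩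
  have han : phi t i < n := phi_lt t hsum hi1 hi2
  have hvA : phi t i + e - n ∈ aset t := memA_add_wrap hsum hsh hen haA hY
  have htop : ((aset t).filter (fun x => ¬ x < n - e)).card
      = ((aset t).filter (· < e)).card := by
    apply Finset.card_bij' (fun x _ => x + e - n) (fun y _ => y + n - e)
    · intro x hx
      simp only [Finset.mem_filter] at hx ⊢
      have hxn : x < n := Finset.mem_range.mp (aset_subset_range hsum hx.1)
      exact ⟨memA_add_wrap hsum hsh hen hx.1 (by omega), by omega⟩
    · intro y hy
      simp only [Finset.mem_filter] at hy ⊢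
      exact ⟨memA_sub_wrap hsum hsh hen hy.1 hy.2, by omega⟩
    · intro x hx
      simp only [Finset.mem_filter] at hx
      have hxn : x < n := Finset.mem_range.mp (aset_subset_range hsum hx.1)
      omega
    · intro y hy
      simp only [Finset.mem_filter] at hy
      omega
  have hpart := Finset.card_filter_add_card_filter_not (s := aset t)
    (p := fun x => x < n - e)
  rw [card_aset] at hpart
  have htop' : ((aset t).filter (· < n - e)).card + ((aset t).filter (· < e)).card
      = t.length := by
    rw [← htop]
    exact hpart
  have hsplit : (aset t).filter (· < phi t i)
      = (aset t).filter (· < n - e) ∪ (aset t).filter (fun x => n - e ≤ x ∧ x < phi t i) := by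
    ext x
    simp only [Finset.mem_filter, Finset.mem_union, ← and_or_left]
    exact and_congr_right (fun _ => by omega)
  have hdisj : Disjoint ((aset t).filter (· < n - e))
      ((aset t).filter (fun x => n - e ≤ x ∧ x < phi t i)) := by
    rw [Finset.disjoint_left]
    intro x hx hx'
    simp only [Finset.mem_filter] at hx hx'
    omega
  have hmid : ((aset t).filter (fun x => n - e ≤ x ∧ x < phi t i)).card
      = ((aset t).filter (· < (phi t i + e - n))).card := by
    apply Finset.card_bij' (fun x _ => x + e - n) (fun y _ => y + n - e)
    · intro x hx
      simp only [Finset.mem_filter] at hx ⊢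
      exact ⟨memA_add_wrap hsum hsh hen hx.1 (by omega), by omega⟩
    · intro y hy
      simp only [Finset.mem_filter] at hy ⊢
      have hyv : y < phi t i + e - n := hy.2
      exact ⟨memA_sub_wrap hsum hsh hen hy.1 (by omega), by omega, by omega⟩
    · intro x hx
      simp only [Finset.mem_filter] at hx
      omega
    · intro y hy
      simp only [Finset.mem_filter] at hy
      omega
  have hcnta : ((aset t).filter (· < phi t i)).card = i - 1 := cnt_phi t hi1 (by omega)
  rw [hsplit, Finset.card_union_of_disjoint hdisj, hmid] at hcnta
  have hcntv : ((aset t).filter (· < (phi t i + e - n))).card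
      = (i - 1) - (t.length - ((aset t).filter (· < e)).card) := by omega
  obtain ⟨heq, hle⟩ := phi_of_cnt hvA hcntv
  refine ⟨by omega, ?_⟩
  rw [show i + ((aset t).filter (· < e)).card - t.length
      = (i - 1) - (t.length - ((aset t).filter (· < e)).card) + 1 by omega]
  exact heq.symm

end Pos

section Fwd
variable {n e : ℕ} {t : List ℕ}

lemma gap_eq (t : List ℕ) {u : ℕ} (hu1 : 1 ≤ u) (hu2 : u ≤ t.length) :
    phi t (u + 1) = phi t u + t[u - 1]'(by omega) + 1 := by
  have := phi_succ t (u - 1) (by omega)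
  rw [show u - 1 + 2 = u + 1 by omega, show u - 1 + 1 = u by omega] at this
  exact this


lemma gcon (t : List ℕ) {a b : ℕ} (h : a = b) (ha : a < t.length) :
    t[a]'ha = t[b]'(h ▸ ha) := by subst h; rfl

lemma rotate_of_stab (hlen : 1 ≤ t.length) (hsum : t.sum + t.length = n)
    (hsh : shf n e (aset t) = aset t) (he : 0 < e) (hen : e < n) :
    t.rotate (((aset t).filter (· < e)).card) = t := by
  obtain ⟨m, hmdef⟩ : ∃ m', ((aset t).filter (· < e)).card = m' := ⟨_, rfl⟩
  rw [hmdef]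
  have hm1 : 1 ≤ m := by
    rw [← hmdef]
    apply Finset.card_pos.mpr
    exact ⟨0, Finset.mem_filter.mpr ⟨zero_mem_aset hlen, he⟩⟩
  obtain ⟨hephi, hms⟩ := e_eq_phi (e := e) hlen hsum hsh hen
  rw [hmdef] at hephi hms
  have htop : phi t (t.length + 1) = n := by rw [phi_top]; omega
  have key : ∀ (i : ℕ) (hi1 : 1 ≤ i) (hi2 : i ≤ t.length),
      t[i - 1]'(by omega) = t[(i - 1 + m) % t.length]'(Nat.mod_lt _ (by omega)) := by
    intro i hi1 hi2
    have hgap1 : phi t (i + 1) = phi t i + t[i-1]'(by omega) + 1 := gap_eq t hi1 hi2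
    rcases Nat.lt_or_ge i t.length with his | his
    · -- i + 1 ≤ t.length
      have hi12 : i + 1 ≤ t.length := by omega
      rcases Nat.lt_or_ge (phi t i + e) n with hXi | hYi
      · obtain ⟨hb1, hp1⟩ := posX hlen hsum hsh hen hi1 hi2 hXi
        rw [hmdef] at hb1 hp1
        rcases Nat.lt_or_ge (phi t (i+1) + e) n with hXi1 | hYi1
        · -- X X
          obtain ⟨hb2, hp2⟩ := posX hlen hsum hsh hen (by omega : 1 ≤ i+1) hi12 hXi1
          rw [hmdef] at hb2 hp2
          have hgap2 : phi t (i + m + 1) = phi t (i + m) + t[i + m - 1]'(by omega) + 1 :=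
            gap_eq t (by omega) (by omega)
          have hbr : phi t (i + m + 1) = phi t (i + 1 + m) :=
            congrArg (phi t) (by omega)
          have hmod : (i - 1 + m) % t.length = i + m - 1 := by
            rw [show i - 1 + m = i + m - 1 by omega]
            exact Nat.mod_eq_of_lt (by omega)
          simp only [hmod]
          omega
        · -- X Y
          obtain ⟨hb2, hp2⟩ := posY hlen hsum hsh he hen (by omega : 1 ≤ i+1) hi12 hYi1
          rw [hmdef] at hb2 hp2
          have him : i + m = t.length := by omega
          rw [show i + 1 + m - t.length = 1 by omega, phi_one] at hp2
          have hgaps : phi t (t.length + 1) = phi t t.length + t[t.length - 1]'(by omega) + 1 :=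
            gap_eq t (by omega) (le_refl _)
          have hbr : phi t (i + m) = phi t t.length := congrArg (phi t) him
          have hmod : (i - 1 + m) % t.length = t.length - 1 := by
            rw [show i - 1 + m = t.length - 1 by omega]
            exact Nat.mod_eq_of_lt (by omega)
          simp only [hmod]
          omega
      · -- Y Y
        have hYi1 : n ≤ phi t (i + 1) + e := by
          have := phi_strictMono t hi1 (show i < i + 1 by omega)
          omega
        obtain ⟨hb1, hp1⟩ := posY hlen hsum hsh he hen hi1 hi2 hYi
        obtain ⟨hb2, hp2⟩ := posY hlen hsum hsh he hen (by omega : 1 ≤ i+1) hi12 hYi1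
        rw [hmdef] at hb1 hp1 hb2 hp2
        have hgap2 : phi t (i + m - t.length + 1)
            = phi t (i + m - t.length) + t[i + m - t.length - 1]'(by omega) + 1 :=
          gap_eq t (by omega) (by omega)
        have hbr : phi t (i + m - t.length + 1) = phi t (i + 1 + m - t.length) :=
          congrArg (phi t) (by omega)
        have h5 : phi t i < n := phi_lt t hsum hi1 hi2
        have h6 : phi t (i+1) < n := phi_lt t hsum (by omega) (by omega)
        have hmod : (i - 1 + m) % t.length = i + m - t.length - 1 := by
          rw [show i - 1 + m = t.length + (i + m - t.length - 1) by omega, Nat.add_mod_left]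
          exact Nat.mod_eq_of_lt (by omega)
        simp only [hmod]
        omega
    · -- i = t.length
      have hieq : i = t.length := by omega
      have hYs : n ≤ phi t i + e := by
        by_contra hc
        push_neg at hc
        obtain ⟨hb1, _⟩ := posX hlen hsum hsh hen hi1 hi2 hc
        rw [hmdef] at hb1
        omega
      obtain ⟨hb1, hp1⟩ := posY hlen hsum hsh he hen hi1 hi2 hYs
      rw [hmdef] at hb1 hp1
      rw [show i + m - t.length = m by omega] at hp1
      have hgapm : phi t (m + 1) = phi t m + t[m - 1]'(by omega) + 1 :=
        gap_eq t (by omega) (by omega)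
      have hbr : phi t (i + 1) = phi t (t.length + 1) := congrArg (phi t) (by omega)
      have hphis : phi t i < n := phi_lt t hsum hi1 hi2
      have hmod : (i - 1 + m) % t.length = m - 1 := by
        rw [show i - 1 + m = t.length + (m - 1) by omega, Nat.add_mod_left]
        exact Nat.mod_eq_of_lt (by omega)
      simp only [hmod]
      omega
  apply List.ext_getElem
  · simp
  · intro k h1 h2
    rw [List.getElem_rotate]
    have hkey := key (k+1) (by omega) (by simpa using h2)
    have e1 : t[k+1-1]'(by omega) = t[k]'(by simpa using h2) := gcon t (by omega) _
    have e2 : t[(k+1-1+m) % t.length]'(Nat.mod_lt _ (by omega))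
        = t[(k+m) % t.length]'(Nat.mod_lt _ (by omega)) :=
      gcon t (congrArg (fun z => z % t.length) (by omega)) _
    rw [e1, e2] at hkey
    exact hkey.symm

end Fwd

section Main
variable {n e : ℕ} {t : List ℕ}

lemma ne_nil (hlen : 1 ≤ t.length) : t ≠ [] := by
  intro h; rw [h] at hlen; simp at hlen

-- D ∣ e for any stabilizing shift e
lemma stab_dvd (hlen : 1 ≤ t.length) (hsum : t.sum + t.length = n)
    (he : 0 < e) (hen : e < n) (hsh : shf n e (aset t) = aset t) :
    ((t.take (period t)).sum + period t) ∣ e := by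
  have hne : t ≠ [] := ne_nil hlen
  have hrot := rotate_of_stab hlen hsum hsh he hen
  obtain ⟨hephi, hms⟩ := e_eq_phi hlen hsum hsh hen
  obtain ⟨m, hmdef⟩ : ∃ m', ((aset t).filter (· < e)).card = m' := ⟨_, rfl⟩
  rw [hmdef] at hrot hephi hms
  have hdvd : period t ∣ m := period_dvd_of_rotate hne hrot
  obtain ⟨w, hw⟩ := hdvd
  have hp := period_isPeriodOf t hne
  have hlen2 := len_eq hp
  have hp1 : 1 ≤ period t := hp.1
  have hcm : period t * w = w * period t := Nat.mul_comm _ _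
  have hwr : w < t.length / period t := by
    by_contra hc
    push_neg at hc
    have h2 : t.length / period t * period t ≤ w * period t := Nat.mul_le_mul_right _ hc
    omega
  have hb := phi_block hp hne (j := 1) (k := w) (le_refl 1) hp1 hwr
  rw [phi_one] at hb
  have hbr : phi t (m + 1) = phi t (1 + w * period t) :=
    congrArg (phi t) (by omega)
  rw [hephi, hbr, hb]
  simp [Nat.mul_comm]

-- reverse: shifting by D fixes aset
lemma shf_D {p : ℕ} (hlen : 1 ≤ t.length) (hsum : t.sum + t.length = n)
    (hp : IsPeriodOf t p) :
    shf n ((t.take p).sum + p) (aset t) = aset t := by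
  have hne : t ≠ [] := ne_nil hlen
  have hn : 0 < n := by omega
  have hlen2 := len_eq hp
  have hsum2 := t_sum_block hp
  have hr1 : 1 ≤ t.length / p :=
    (Nat.one_le_div_iff (by have := hp.1; omega)).mpr (p_le_len hp hne)
  have hnrD : n = (t.length / p) * ((t.take p).sum + p) := by
    rw [Nat.mul_add, ← hsum2, ← hlen2]
    omega
  apply Finset.eq_of_subset_of_card_le
  · -- shf ⊆ aset
    intro x hx
    simp only [shf, Finset.mem_image] at hx
    obtain ⟨a, ha, rfl⟩ := hx
    obtain ⟨i, hi1, hi2, rfl⟩ := mem_aset.mp ha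
    obtain ⟨j, k, hj1, hjp, hkr, hik⟩ : ∃ j k, 1 ≤ j ∧ j ≤ p ∧ k < t.length / p
        ∧ i = j + k * p := by
      refine ⟨(i - 1) % p + 1, (i - 1) / p, by omega, ?_, ?_, ?_⟩
      · have := Nat.mod_lt (i - 1) (show 0 < p from hp.1)
        omega
      · exact Nat.div_lt_div_of_lt_of_dvd hp.2.1 (by omega)
      · have h1 := Nat.div_add_mod (i - 1) p
        have h2 : p * ((i-1)/p) = (i-1)/p * p := Nat.mul_comm _ _
        omega
    have hbl := phi_block hp hne hj1 hjp hkr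
    have hbi : phi t i = phi t (j + k * p) := congrArg (phi t) hik
    rcases Nat.lt_or_ge (k + 1) (t.length / p) with hk1 | hk1
    · -- no wrap
      have hbl2 := phi_block hp hne hj1 hjp hk1
      have hidx : 1 ≤ j + (k+1) * p ∧ j + (k+1) * p ≤ t.length := by
        constructor
        · omega
        · have h4 : (k+2) * p ≤ (t.length / p) * p := Nat.mul_le_mul_right p (by omega)
          have hb4 : (k+2) * p = (k+1) * p + p := by ring
          omega
      have hval : phi t i + ((t.take p).sum + p) = phi t (j + (k+1) * p) := by
        rw [hbi, hbl, hbl2]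
        ring
      have hlt : phi t (j + (k+1) * p) < n := phi_lt t hsum hidx.1 hidx.2
      rw [hval, Nat.mod_eq_of_lt hlt]
      exact mem_aset.mpr ⟨_, hidx.1, hidx.2, rfl⟩
    · -- wrap : k + 1 = t.length / p
      have hkeq : k + 1 = t.length / p := by omega
      have hval : phi t i + ((t.take p).sum + p) = phi t j + n := by
        rw [hbi, hbl, phi_take hp (by omega), hnrD, ← hkeq]
        ring
      have hjlen : j ≤ t.length := le_trans hjp (p_le_len hp hne)
      have hjlt : phi t j < n := phi_lt t hsum hj1 hjlen
      rw [hval, Nat.add_mod_right, Nat.mod_eq_of_lt hjlt]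
      exact mem_aset.mpr ⟨j, hj1, hjlen, rfl⟩
  · rw [card_shf hn (aset_subset_range hsum)]

lemma shf_mul {c : ℕ} (hsum : t.sum + t.length = n)
    (h : shf n c (aset t) = aset t) (k : ℕ) : shf n (k * c) (aset t) = aset t := by
  induction k with
  | zero => simpa using shf_zero (aset_subset_range hsum)
  | succ k ih =>
    have : shf n c (shf n (k * c) (aset t)) = aset t := by rw [ih, h]
    rw [shf_shf] at this
    rw [show (k+1) * c = k * c + c by ring]
    exact this

-- coal in terms of shf
lemma coal_eq_image {x : ℕ} (hx : 1 ≤ x) :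
    coal n x t = (shf n (x - 1) (aset t)).image (· + 1) := by
  unfold coal shf aset
  rw [Finset.image_image, Finset.image_image]
  apply Finset.image_congr
  intro i _
  simp only [Function.comp_apply]
  rw [Nat.add_comm (x-1) (phi t i), Nat.add_comm (phi t i) (x-1)]

lemma coal_eq_iff_shf {x y : ℕ} (hx : 1 ≤ x) (hy : 1 ≤ y) :
    coal n x t = coal n y t ↔ shf n (x - 1) (aset t) = shf n (y - 1) (aset t) := by
  rw [coal_eq_image hx, coal_eq_image hy]
  constructor
  · intro h
    exact Finset.image_injective (fun a b hab => by omega) h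
  · intro h
    rw [h]

end Main

section Main2
variable {n : ℕ} {t : List ℕ}

lemma shf_add_n (n c : ℕ) (A : Finset ℕ) : shf n (c + n) A = shf n c A := by
  unfold shf
  apply Finset.image_congr
  intro a _
  simp only
  rw [← Nat.add_assoc, Nat.add_mod_right]

lemma n_eq_rD (hlen : 1 ≤ t.length) (hsum : t.sum + t.length = n) :
    n = (t.length / period t) * ((t.take (period t)).sum + period t) := by
  have hp := period_isPeriodOf t (ne_nil hlen)
  rw [Nat.mul_add, ← t_sum_block hp, ← len_eq hp]
  omega

lemma main_fwd (hlen : 1 ≤ t.length) (hsum : t.sum + t.length = n)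
    {i j : ℕ} (hi : 1 ≤ i) (hin : i ≤ n) (hj : 1 ≤ j) (hjn : j ≤ n) (hji : j ≤ i)
    (h : coal n i t = coal n j t) :
    i ≡ j [MOD (t.take (period t)).sum + period t] := by
  have hn : 1 ≤ n := by omega
  have hA := aset_subset_range hsum
  rw [coal_eq_iff_shf hi hj] at h
  have h2 := congrArg (shf n (n - (j-1))) h
  rw [shf_shf, shf_shf, show (j-1) + (n - (j-1)) = n by omega, shf_n hA] at h2
  rw [show (i-1) + (n - (j-1)) = (i - j) + n by omega, shf_add_n] at h2
  rcases Nat.eq_zero_or_pos (i - j) with h0 | hpos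
  · have : i = j := by omega
    rw [this]
  · have hlt : i - j < n := by omega
    have hdvd := stab_dvd hlen hsum hpos hlt h2
    exact ((Nat.modEq_iff_dvd' hji).mpr hdvd).symm

lemma main_rev (hlen : 1 ≤ t.length) (hsum : t.sum + t.length = n)
    {i j : ℕ} (hi : 1 ≤ i) (hj : 1 ≤ j) (hji : j ≤ i)
    (h : i ≡ j [MOD (t.take (period t)).sum + period t]) :
    coal n i t = coal n j t := by
  have hp := period_isPeriodOf t (ne_nil hlen)
  obtain ⟨k, hk⟩ := (Nat.modEq_iff_dvd' hji).mp h.symm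
  rw [coal_eq_iff_shf hi hj]
  have hsD := shf_mul hsum (shf_D hlen hsum hp) k
  have h3 : shf n (j-1) (shf n (k * ((t.take (period t)).sum + period t)) (aset t))
      = shf n (j-1) (aset t) := by rw [hsD]
  rw [shf_shf] at h3
  rw [show i - 1 = k * ((t.take (period t)).sum + period t) + (j - 1) by
    have : ((t.take (period t)).sum + period t) * k
        = k * ((t.take (period t)).sum + period t) := Nat.mul_comm _ _
    omega]
  exact h3

lemma main_iff (hlen : 1 ≤ t.length) (hsum : t.sum + t.length = n)
    {i j : ℕ} (hi : 1 ≤ i) (hin : i ≤ n) (hj : 1 ≤ j) (hjn : j ≤ n) :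
    coal n i t = coal n j t ↔ i ≡ j [MOD (t.take (period t)).sum + period t] := by
  constructor
  · intro h
    rcases le_total j i with hji | hij
    · exact main_fwd hlen hsum hi hin hj hjn hji h
    · exact (main_fwd hlen hsum hj hjn hi hin hij h.symm).symm
  · intro h
    rcases le_total j i with hji | hij
    · exact main_rev hlen hsum hi hj hji h
    · exact (main_rev hlen hsum hj hi hij h.symm).symm

lemma gen_card (hlen : 1 ≤ t.length) (hsum : t.sum + t.length = n) :
    (gen n t).card = (t.take (period t)).sum + period t := by
  have hp := period_isPeriodOf t (ne_nil hlen)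
  have hD1 : 1 ≤ (t.take (period t)).sum + period t := by have := hp.1; omega
  have hrD := n_eq_rD hlen hsum
  have hr1 : 1 ≤ t.length / period t :=
    (Nat.one_le_div_iff (by have := hp.1; omega)).mpr (p_le_len hp (ne_nil hlen))
  have hDn : (t.take (period t)).sum + period t ≤ n := by
    calc (t.take (period t)).sum + period t
        = 1 * ((t.take (period t)).sum + period t) := (Nat.one_mul _).symm
      _ ≤ (t.length / period t) * ((t.take (period t)).sum + period t) :=
          Nat.mul_le_mul_right _ hr1
      _ = n := hrD.symm
  have hstep : gen n t
      = (Finset.Icc 1 ((t.take (period t)).sum + period t)).image (fun x => coal n x t) := by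
    apply Finset.Subset.antisymm
    · intro C hC
      simp only [gen, Finset.mem_image, Finset.mem_Icc] at hC ⊢
      obtain ⟨x, ⟨hx1, hx2⟩, rfl⟩ := hC
      refine ⟨(x - 1) % ((t.take (period t)).sum + period t) + 1,
        ⟨by omega, ?_⟩, ?_⟩
      · have := Nat.mod_lt (x-1) (show 0 < (t.take (period t)).sum + period t by omega)
        omega
      · apply (main_iff hlen hsum (by omega) ?_ hx1 hx2).mpr
        · have hmm := (Nat.mod_modEq (x-1) ((t.take (period t)).sum + period t)).add_right 1
          have e1 : x - 1 + 1 = x := by omega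
          rw [e1] at hmm
          exact hmm
        · have := Nat.mod_lt (x-1) (show 0 < (t.take (period t)).sum + period t by omega)
          omega
    · intro C hC
      simp only [gen, Finset.mem_image, Finset.mem_Icc] at hC ⊢
      obtain ⟨x, ⟨hx1, hx2⟩, rfl⟩ := hC
      exact ⟨x, ⟨hx1, by omega⟩, rfl⟩
  rw [hstep, Finset.card_image_of_injOn, Nat.card_Icc]
  · omega
  · intro x hx y hy hxy
    simp only [Finset.mem_coe, Finset.mem_Icc] at hx hy
    have hmod := (main_iff hlen hsum hx.1 (by omega) hy.1 (by omega)).mp hxy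
    have h'' : (x-1)+1 ≡ (y-1)+1 [MOD (t.take (period t)).sum + period t] := by
      rwa [show x-1+1 = x by omega, show y-1+1 = y by omega]
    have h3 := Nat.ModEq.add_right_cancel' 1 h''
    unfold Nat.ModEq at h3
    rw [Nat.mod_eq_of_lt (by omega), Nat.mod_eq_of_lt (by omega)] at h3
    omega

end Main2

/-- For any increment array `t` of size `s` with period
`π(t)`, the number of distinct coalitions generated by `t` as the starting
agent ranges over `{1,…,n}` is exactly the stride `n·π(t)/s`.  Moreover,
`C(i,t) = C(j,t)` iff `i ≡ j (mod n·π(t)/s)`. -/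
theorem stmt7 (n s : ℕ) (hn : 1 ≤ n) (hs1 : 1 ≤ s) (hsn : s ≤ n)
    (t : List ℕ) (ht : IsIA n s t) :
    (gen n t).card = n * period t / s ∧
    ∀ i ∈ Finset.Icc 1 n, ∀ j ∈ Finset.Icc 1 n,
      (coal n i t = coal n j t ↔ i ≡ j [MOD n * period t / s]) := by
  obtain ⟨hlen, hsum0⟩ := ht
  subst hlen
  have hsum : t.sum + t.length = n := by omega
  have hlen1 : 1 ≤ t.length := hs1
  have hp := period_isPeriodOf t (ne_nil hlen1)
  have hDeq : n * period t / t.length = (t.take (period t)).sum + period t := by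
    have hrD := n_eq_rD hlen1 hsum
    have hlen2 := len_eq hp
    have hkey : n * period t = ((t.take (period t)).sum + period t) * t.length := by
      calc n * period t
          = (t.length / period t) * ((t.take (period t)).sum + period t) * period t := by
            rw [← hrD]
        _ = ((t.take (period t)).sum + period t) * ((t.length / period t) * period t) := by
            ring
        _ = ((t.take (period t)).sum + period t) * t.length := by rw [← hlen2]
    rw [hkey, Nat.mul_div_cancel _ (by omega : 0 < t.length)]
  rw [hDeq]
  constructor
  · exact gen_card hlen1 hsum
  · intro i hi j hj
    simp only [Finset.mem_Icc] at hi hj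
    exact main_iff hlen1 hsum hi.1 hi.2 hj.1 hj.2



end NDCA
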